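/- Let G be a tree grammar with finitely many nonterminals and finitely many rules, and cost function with cost(r) > 0 for every rule r. Let p be a program generated from a nonterminal X, and suppose p has a successor wrt X. Then there exists a node n of the derivation tree of p such that, writing Y for the left-hand nonterminal of the rule labeling n, the subprogram p_n rooted at n satisfies condition (*) (no nonterminal occurs twice along any root-to-leaf path of p_n) and p_n has a successor wrt Y. -/

import Mathlib

/-- Finitely-branching trees with nodes labeled by elements of `R` (derivation trees). -/
inductive Tree' (R : Type) : Type
  | node : R → List (Tree' R) → Tree' R

/-- The label of the root node. -/
def Tree'.rootLabel {R : Type} : Tree' R → R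
  | .node r _ => r

/-- A tree grammar: nonterminals `Γ`, derivation rules `R`, each rule having a
left-hand nonterminal and a list of argument nonterminals. -/
structure TreeGrammar where
  Γ : Type
  R : Type
  lhs : R → Γ
  args : R → List Γ

/-- Well-formed derivation trees (programs) of a tree grammar. -/
inductive TreeGrammar.WF (G : TreeGrammar) : Tree' G.R → Prop
  | node (r : G.R) (ts : List (Tree' G.R))
      (hlen : ts.length = (G.args r).length)
      (hwf : ∀ t ∈ ts, G.WF t)
      (hlhs : ∀ i : ℕ, (h : i < ts.length) →
        G.lhs (ts[i].rootLabel) = (G.args r)[i]'(hlen ▸ h)) :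
      G.WF (Tree'.node r ts)

/-- `p` is a program generated from the nonterminal `X`. -/
def TreeGrammar.GenFrom (G : TreeGrammar) (X : G.Γ) (p : Tree' G.R) : Prop :=
  G.WF p ∧ G.lhs p.rootLabel = X

/-- The cost of a program, extending a cost function on rules. -/
def costP {R : Type} (cost : R → ℝ) : Tree' R → ℝ
  | .node r ts => cost r + (ts.attach.map (fun t => costP cost t.1)).sum
decreasing_by
  have := List.sizeOf_lt_of_mem t.2
  simp only [Tree'.node.sizeOf_spec]
  omega

/-- The number of nodes of a derivation tree. -/
def sizeP {R : Type} : Tree' R → ℕ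
  | .node _ ts => 1 + (ts.attach.map (fun t => sizeP t.1)).sum
decreasing_by
  have := List.sizeOf_lt_of_mem t.2
  simp only [Tree'.node.sizeOf_spec]
  omega

/-- The depth of a derivation tree: number of nodes on a longest root-to-leaf path. -/
def depthP {R : Type} : Tree' R → ℕ
  | .node _ ts => 1 + (ts.attach.map (fun t => depthP t.1)).foldr max 0
decreasing_by
  have := List.sizeOf_lt_of_mem t.2
  simp only [Tree'.node.sizeOf_spec]
  omega

/-- `p'` is a successor of `p` with respect to the nonterminal `X`:
`p'` is generated from `X`, has strictly larger cost than `p`, and no program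
generated from `X` has cost strictly between the two. -/
def IsSucc (G : TreeGrammar) (cost : G.R → ℝ) (X : G.Γ) (p p' : Tree' G.R) : Prop :=
  G.GenFrom X p' ∧ costP cost p < costP cost p' ∧
    ∀ p'', G.GenFrom X p'' →
      ¬(costP cost p < costP cost p'' ∧ costP cost p'' < costP cost p')

/-- `X` occurs as the left-hand nonterminal of the rule labeling some node of the tree. -/
inductive OccursLhs (G : TreeGrammar) (X : G.Γ) : Tree' G.R → Prop
  | here (r : G.R) (ts : List (Tree' G.R)) : G.lhs r = X → OccursLhs G X (.node r ts)
  | there (r : G.R) (ts : List (Tree' G.R)) (t : Tree' G.R) :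
      t ∈ ts → OccursLhs G X t → OccursLhs G X (.node r ts)

/-- Condition (*): along every root-to-leaf path, no nonterminal occurs twice as the
left-hand nonterminal of the rules labeling the nodes on the path. -/
inductive StarCond (G : TreeGrammar) : Tree' G.R → Prop
  | node (r : G.R) (ts : List (Tree' G.R))
      (hsub : ∀ t ∈ ts, StarCond G t)
      (hnew : ∀ t ∈ ts, ¬ OccursLhs G (G.lhs r) t) :
      StarCond G (.node r ts)

/-- `IsSubtree s t`: `s` is the subtree of `t` rooted at some node of `t`. -/
inductive IsSubtree {R : Type} : Tree' R → Tree' R → Prop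
  | refl (t : Tree' R) : IsSubtree t t
  | child (s : Tree' R) (r : R) (ts : List (Tree' R)) (t : Tree' R) :
      t ∈ ts → IsSubtree s t → IsSubtree s (.node r ts)

/-- `IsStrictSubtree s t`: `s` is the subtree of `t` rooted at a strict descendant
of the root of `t`. -/
inductive IsStrictSubtree {R : Type} : Tree' R → Tree' R → Prop
  | child (s : Tree' R) (r : R) (ts : List (Tree' R)) (t : Tree' R) :
      t ∈ ts → IsSubtree s t → IsStrictSubtree s (.node r ts)

/-- The subtree of a tree at a given position (a list of child indices), if it exists. -/
def subtreeAt {R : Type} : Tree' R → List ℕ → Option (Tree' R)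
  | t, [] => some t
  | .node _ ts, i :: is =>
      match ts[i]? with
      | some t => subtreeAt t is
      | none => none

/-- Replacing the subtree at a given position by `q`. -/
def replaceAt {R : Type} : Tree' R → List ℕ → Tree' R → Tree' R
  | _, [], q => q
  | .node r ts, i :: is, q =>
      match ts[i]? with
      | some t => .node r (ts.set i (replaceAt t is q))
      | none => .node r ts

open scoped ENNReal in
/-- The Bellman operator associated with a tree grammar and a cost function. -/
noncomputable def bellman (G : TreeGrammar) (cost : G.R → ℝ) (c : G.Γ → ℝ≥0∞) : G.Γ → ℝ≥0∞ :=
  fun X => ⨅ r ∈ {r : G.R | G.lhs r = X},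
    (ENNReal.ofReal (cost r) + ((G.args r).map c).sum)


/-!
If `p` satisfies (*), take `n` to be the root. Otherwise pick a lowest node `r` whose
subprogram violates (*): the nonterminal `lhs r` recurs in some child `t` of `r`, and `t`
satisfies (*). Grafting the whole subprogram at `r` over that recurrence inside `t` is a
program from the same nonterminal as `t`, of strictly larger cost because costs are
positive. Since costs are bounded below by `min cost > 0`, only finitely many programs
have cost below any bound, so some program from `lhs t` of cost greater than `t` has
least cost: it is a successor of `t`.
-/

@[induction_eliminator]
theorem Tree'.ind {R : Type} {motive : Tree' R → Prop}
    (node : ∀ r ts, (∀ t ∈ ts, motive t) → motive (.node r ts)) : ∀ t, motive t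
  | .node r ts => node r ts fun t _ => Tree'.ind node t
decreasing_by
  have := List.sizeOf_lt_of_mem ‹t ∈ ts›
  simp only [Tree'.node.sizeOf_spec]
  omega

section Cost

variable {R : Type} {cost : R → ℝ}

theorem costP_node (r : R) (ts : List (Tree' R)) :
    costP cost (.node r ts) = cost r + (ts.map (costP cost)).sum := by
  rw [costP, List.attach_map_val]

theorem sizeP_node (r : R) (ts : List (Tree' R)) :
    sizeP (.node r ts) = 1 + (ts.map sizeP).sum := by
  rw [sizeP, List.attach_map_val]

theorem costP_pos (hpos : ∀ r, 0 < cost r) (t : Tree' R) : 0 < costP cost t := by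
  induction t with
  | node r ts ih =>
    rw [costP_node]
    have : 0 ≤ (ts.map (costP cost)).sum :=
      List.sum_nonneg (by simpa using fun t ht => (ih t ht).le)
    linarith [hpos r]

theorem costP_lt_costP_node (hpos : ∀ r, 0 < cost r) {t : Tree' R} {r : R}
    {ts : List (Tree' R)} (ht : t ∈ ts) : costP cost t < costP cost (.node r ts) := by
  have : costP cost t ≤ (ts.map (costP cost)).sum :=
    List.single_le_sum (by simpa using fun u _ => (costP_pos hpos u).le) _
      (List.mem_map_of_mem ht)
  rw [costP_node]
  linarith [hpos r]

theorem costP_le_of_isSubtree (hpos : ∀ r, 0 < cost r) {s t : Tree' R}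
    (h : IsSubtree s t) : costP cost s ≤ costP cost t := by
  induction h with
  | refl => rfl
  | child r _ _ hmem _ ih => exact ih.trans (costP_lt_costP_node hpos hmem).le

theorem costP_lt_of_isStrictSubtree (hpos : ∀ r, 0 < cost r) {s t : Tree' R}
    (h : IsStrictSubtree s t) : costP cost s < costP cost t := by
  cases h with
  | child _ _ _ hmem hsub =>
  exact (costP_le_of_isSubtree hpos hsub).trans_lt (costP_lt_costP_node hpos hmem)

theorem costP_node_set (r : R) (ts : List (Tree' R)) {i : ℕ} (hi : i < ts.length)
    (t' : Tree' R) :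
    costP cost (.node r (ts.set i t')) = costP cost (.node r ts) - costP cost ts[i] +
      costP cost t' := by
  rw [costP_node, costP_node, List.map_set, List.sum_set', dif_pos (by simpa using hi)]
  simp only [List.getElem_map]
  ring

theorem sizeP_mul_le_costP {ε : ℝ} (hε : ∀ r, ε ≤ cost r) (t : Tree' R) :
    sizeP t * ε ≤ costP cost t := by
  induction t with
  | node r ts ih =>
    have hchildren : ((ts.map sizeP).sum : ℝ) * ε ≤ (ts.map (costP cost)).sum := by
      rw [Nat.cast_list_sum, List.map_map, ← List.sum_map_mul_right]
      exact List.sum_le_sum ih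
    rw [sizeP_node, costP_node, Nat.cast_add, Nat.cast_one]
    linarith [hε r]

end Cost

section Finiteness

theorem Set.Finite.setOf_length_le_forall_mem {α : Type*} {s : Set α} (hs : s.Finite)
    (n : ℕ) : {l : List α | l.length ≤ n ∧ ∀ x ∈ l, x ∈ s}.Finite := by
  have := hs.to_subtype
  refine ((List.finite_length_le s n).image (List.map Subtype.val)).subset ?_
  rintro l ⟨hlen, hmem⟩
  refine ⟨l.pmap Subtype.mk hmem, by simpa using hlen, ?_⟩
  rw [List.map_pmap]
  exact List.pmap_eq_self.mpr fun _ _ => rfl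

theorem length_le_sum_map_sizeP {R : Type} (ts : List (Tree' R)) :
    ts.length ≤ (ts.map sizeP).sum := by
  induction ts with
  | nil => simp
  | cons t ts ih =>
    obtain ⟨r, us⟩ := t
    simp only [List.map_cons, List.sum_cons, List.length_cons, sizeP_node]
    omega

theorem finite_setOf_sizeP_le {R : Type} [Finite R] (N : ℕ) :
    {t : Tree' R | sizeP t ≤ N}.Finite := by
  induction N with
  | zero =>
    convert Set.finite_empty
    ext ⟨r, ts⟩
    simp [sizeP_node]
  | succ N ih =>
    refine ((Set.finite_univ (α := R)).image2 Tree'.node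
      (ih.setOf_length_le_forall_mem N)).subset ?_
    rintro ⟨r, ts⟩ ht
    replace ht : 1 + (ts.map sizeP).sum ≤ N + 1 := by rwa [← sizeP_node]
    refine ⟨r, trivial, ts, ⟨?_, fun t hmem => ?_⟩, rfl⟩
    · linarith [length_le_sum_map_sizeP ts]
    · have : sizeP t ≤ (ts.map sizeP).sum :=
        List.single_le_sum (by simp) _ (List.mem_map_of_mem hmem)
      exact (by omega : sizeP t ≤ N)

theorem finite_setOf_costP_le {R : Type} [Finite R] [Nonempty R] {cost : R → ℝ}
    (hpos : ∀ r, 0 < cost r) (B : ℝ) : {t : Tree' R | costP cost t ≤ B}.Finite := by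
  obtain ⟨r₀, hr₀⟩ := Finite.exists_min cost
  refine (finite_setOf_sizeP_le ⌈B / cost r₀⌉₊).subset fun t ht => ?_
  have : (sizeP t : ℝ) ≤ B / cost r₀ := by
    rw [le_div_iff₀ (hpos r₀)]
    exact (sizeP_mul_le_costP hr₀ t).trans ht
  exact Nat.cast_le.mp (this.trans (Nat.le_ceil _))

end Finiteness

section Grammar

variable {G : TreeGrammar} {cost : G.R → ℝ}

theorem IsSubtree.trans {R : Type} {s t u : Tree' R} (hst : IsSubtree s t)
    (htu : IsSubtree t u) : IsSubtree s u := by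
  induction htu with
  | refl => exact hst
  | child r ts v hmem _ ih => exact .child s r ts v hmem ih

theorem OccursLhs.exists_isSubtree {X : G.Γ} {t : Tree' G.R} (h : OccursLhs G X t) :
    ∃ s, IsSubtree s t ∧ G.lhs s.rootLabel = X := by
  induction h with
  | here r ts hr => exact ⟨_, .refl _, hr⟩
  | there r ts t hmem _ ih =>
    obtain ⟨s, hsub, hs⟩ := ih
    exact ⟨s, .child s r ts t hmem hsub, hs⟩

theorem TreeGrammar.WF.of_mem {r : G.R} {ts : List (Tree' G.R)}
    (h : G.WF (.node r ts)) {t : Tree' G.R} (ht : t ∈ ts) : G.WF t := by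
  cases h with
  | node _ _ _ hwf _ => exact hwf t ht

theorem TreeGrammar.WF.of_isSubtree {s t : Tree' G.R} (h : IsSubtree s t) (hw : G.WF t) :
    G.WF s := by
  induction h with
  | refl => exact hw
  | child _ _ _ hmem _ ih => exact ih (hw.of_mem hmem)

theorem TreeGrammar.WF.node_set {r : G.R} {ts : List (Tree' G.R)} (h : G.WF (.node r ts))
    {i : ℕ} (hi : i < ts.length) {t' : Tree' G.R} (ht' : G.WF t')
    (hl : G.lhs t'.rootLabel = G.lhs ts[i].rootLabel) : G.WF (.node r (ts.set i t')) := by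
  obtain ⟨_, _, hlen, hwf, hlhs⟩ := h
  refine .node r _ (by simpa using hlen) (fun x hx => ?_) (fun j hj => ?_)
  · rcases List.mem_or_eq_of_mem_set hx with hx | rfl
    exacts [hwf x hx, ht']
  · rw [List.length_set] at hj
    rw [List.getElem_set]
    split_ifs with hij
    · subst hij; rw [hl]; exact hlhs i hi
    · exact hlhs j hj

theorem TreeGrammar.WF.exists_replace {s t u : Tree' G.R} (hsub : IsSubtree s t)
    (ht : G.WF t) (hu : G.WF u) (hl : G.lhs u.rootLabel = G.lhs s.rootLabel) :
    ∃ t', G.WF t' ∧ G.lhs t'.rootLabel = G.lhs t.rootLabel ∧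
      costP cost t' = costP cost t - costP cost s + costP cost u := by
  induction hsub with
  | refl => exact ⟨u, hu, hl, by ring⟩
  | child r ts t hmem _ ih =>
    obtain ⟨t', hwf', hl', hc'⟩ := ih (ht.of_mem hmem)
    obtain ⟨i, hi, rfl⟩ := List.mem_iff_getElem.mp hmem
    refine ⟨.node r (ts.set i t'), ht.node_set hi hwf' hl', rfl, ?_⟩
    rw [costP_node_set r ts hi, hc']
    ring

theorem exists_isSubtree_starCond_occursLhs_of_not_starCond {p : Tree' G.R}
    (hp : ¬ StarCond G p) : ∃ r ts t, IsSubtree (.node r ts) p ∧ t ∈ ts ∧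
      StarCond G t ∧ OccursLhs G (G.lhs r) t := by
  induction p with
  | node r ts ih =>
    by_cases hchildren : ∀ t ∈ ts, StarCond G t
    · have : ∃ t ∈ ts, OccursLhs G (G.lhs r) t := by
        by_contra! hnew
        exact hp (.node r ts hchildren hnew)
      obtain ⟨t, hmem, hocc⟩ := this
      exact ⟨r, ts, t, .refl _, hmem, hchildren t hmem, hocc⟩
    · push Not at hchildren
      obtain ⟨t, hmem, ht⟩ := hchildren
      obtain ⟨r', ts', t', hsub, h⟩ := ih t hmem ht
      exact ⟨r', ts', t', .child _ r ts t hmem hsub, h⟩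

theorem exists_isSucc_of_costP_lt [Finite G.R] (hpos : ∀ r, 0 < cost r) {Y : G.Γ}
    {q w : Tree' G.R} (hw : G.GenFrom Y w) (hqw : costP cost q < costP cost w) :
    ∃ q', IsSucc G cost Y q q' := by
  have : Nonempty G.R := ⟨w.rootLabel⟩
  let D := {u | G.GenFrom Y u ∧ costP cost q < costP cost u ∧ costP cost u ≤ costP cost w}
  have hD : D.Finite :=
    (finite_setOf_costP_le hpos (costP cost w)).subset fun u hu => hu.2.2
  obtain ⟨q', ⟨hgen, hlt, hle⟩, hmin⟩ :=
    D.exists_min_image (costP cost) hD ⟨w, hw, hqw, le_rfl⟩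
  exact ⟨q', hgen, hlt, fun p'' hp'' ⟨hqp'', hp''q'⟩ =>
    (hmin p'' ⟨hp'', hqp'', hp''q'.le.trans hle⟩).not_gt hp''q'⟩

end Grammar

theorem stmt11_general (G : TreeGrammar) [Fintype G.R] (cost : G.R → ℝ)
    (hpos : ∀ r, 0 < cost r) (X : G.Γ) (p : Tree' G.R) (hp : G.GenFrom X p)
    (hsucc : ∃ p' : Tree' G.R, IsSucc G cost X p p') :
    ∃ q : Tree' G.R, IsSubtree q p ∧ StarCond G q ∧
      ∃ q' : Tree' G.R, IsSucc G cost (G.lhs q.rootLabel) q q' := by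
  obtain ⟨hwf, rfl⟩ := hp
  by_cases hstar : StarCond G p
  · exact ⟨p, .refl p, hstar, hsucc⟩
  obtain ⟨r, ts, t, hnode, hmem, ht, hocc⟩ :=
    exists_isSubtree_starCond_occursLhs_of_not_starCond hstar
  obtain ⟨s, hs, hsl⟩ := hocc.exists_isSubtree
  have hwf_node := hwf.of_isSubtree hnode
  obtain ⟨t', hwf', hl', hcost⟩ :=
    (hwf_node.of_mem hmem).exists_replace (cost := cost) hs hwf_node hsl.symm
  have hpump : costP cost t < costP cost t' := by
    have := costP_lt_of_isStrictSubtree hpos (.child s r ts t hmem hs)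
    linarith
  exact ⟨t, (IsSubtree.child t r ts t hmem (.refl t)).trans hnode, ht,
    exists_isSucc_of_costP_lt hpos ⟨hwf', hl'⟩ hpump⟩

/-- if a program `p` generated from `X` has a successor wrt `X`, then
some node of `p` determines a subprogram satisfying condition (*) which itself has a
successor wrt its left-hand nonterminal. -/
theorem stmt11 (G : TreeGrammar) [Fintype G.Γ] [Fintype G.R] (cost : G.R → ℝ)
    (hpos : ∀ r, 0 < cost r) (X : G.Γ) (p : Tree' G.R) (hp : G.GenFrom X p)
    (hsucc : ∃ p' : Tree' G.R, IsSucc G cost X p p') :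
    ∃ q : Tree' G.R, IsSubtree q p ∧ StarCond G q ∧
      ∃ q' : Tree' G.R, IsSucc G cost (G.lhs q.rootLabel) q q' :=
  stmt11_general G cost hpos X p hp hsucc
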